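/- arXiv:1508.00705 — 4 statements merged into one kernel-verified Lean document; each statement's English description precedes it below -/
import Mathlib

section
/- Let V be a finite-dimensional real vector space, B a nondegenerate symmetric bilinear form on V, ω an alternating (skew-symmetric) bilinear form on V, and u ∈ V a fixed vector. Then there exists a unique linear map A : V → End(V) such that for every v ∈ V the endomorphism A(v) is skew-adjoint with respect to B, and A(v)(w) − A(w)(v) = ω(v, w) • u for all v, w ∈ V. -/
/-!
Lowering the output index with `B` turns `A` into the trilinear form `T v w x = B (A v w) x`.
Skew-adjointness of every `A v` says that `T` is antisymmetric in its last two arguments, and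
the prolongation equation says that `T v w x - T w v x = c v w x` with `c v w x = ω v w * B u x`,
which is antisymmetric in its first two arguments. As in the Koszul formula for the Levi-Civita
connection, such a `T` is recovered from `c` by `2 T v w x = c v w x - c w x v + c x v w`, and
conversely this formula solves the equation for every `c` antisymmetric in its first two arguments.
-/

namespace LinearMap

section Koszul

variable {R M N : Type*} [CommRing R] [AddCommGroup M] [Module R M] [AddCommGroup N] [Module R N]

def cyclicPerm (T : M →ₗ[R] M →ₗ[R] M →ₗ[R] N) :
    M →ₗ[R] M →ₗ[R] M →ₗ[R] N :=
  (lflip.toLinearMap ∘ₗ T).flip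

@[simp]
lemma cyclicPerm_apply (T : M →ₗ[R] M →ₗ[R] M →ₗ[R] N) (v w x : M) :
    cyclicPerm T v w x = T w x v :=
  rfl

variable [Invertible (2 : R)]

def koszul (c : M →ₗ[R] M →ₗ[R] M →ₗ[R] N) : M →ₗ[R] M →ₗ[R] M →ₗ[R] N :=
  (⅟2 : R) • (c - cyclicPerm c + cyclicPerm (cyclicPerm c))

lemma koszul_apply (c : M →ₗ[R] M →ₗ[R] M →ₗ[R] N) (v w x : M) :
    koszul c v w x = (⅟2 : R) • (c v w x - c w x v + c x v w) := by
  simp [koszul]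

variable {c : M →ₗ[R] M →ₗ[R] M →ₗ[R] N}

lemma koszul_sub_koszul_swap (hc : ∀ v w x, c w v x = -c v w x) (v w x : M) :
    koszul c v w x - koszul c w v x = c v w x := by
  rw [koszul_apply, koszul_apply, ← smul_sub, hc w x, hc x v, hc v w]
  conv_rhs => rw [← invOf_two_smul_add_invOf_two_smul R (c v w x), ← smul_add]
  congr 1
  abel

lemma koszul_swap (hc : ∀ v w x, c w v x = -c v w x) (v w x : M) :
    koszul c v x w = -koszul c v w x := by
  rw [koszul_apply, koszul_apply, ← smul_neg, hc x v, hc w x, hc v w]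
  congr 1
  abel

lemma eq_koszul {T : M →ₗ[R] M →ₗ[R] M →ₗ[R] N} (hT : ∀ v w x, T v x w = -T v w x)
    (hTc : ∀ v w x, T v w x - T w v x = c v w x) : T = koszul c := by
  ext v w x
  rw [koszul_apply, ← hTc, ← hTc, ← hTc, hT w x v, hT x v w, hT v w x]
  conv_lhs => rw [← invOf_two_smul_add_invOf_two_smul R (T v w x), ← smul_add]
  congr 1
  abel

theorem existsUnique_swap_eq_neg_and_sub_swap_eq (hc : ∀ v w x, c w v x = -c v w x) :
    ∃! T : M →ₗ[R] M →ₗ[R] M →ₗ[R] N,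
      (∀ v w x, T v x w = -T v w x) ∧ ∀ v w x, T v w x - T w v x = c v w x :=
  ⟨koszul c, ⟨koszul_swap hc, koszul_sub_koszul_swap hc⟩,
    fun _ ⟨hT, hTc⟩ => eq_koszul hT hTc⟩

end Koszul

section LowerIndex

variable {K V : Type*} [Field K] [AddCommGroup V] [Module K V] [FiniteDimensional K V]
  {B : V →ₗ[K] V →ₗ[K] K} (hB : B.Nondegenerate)

variable (B) in
noncomputable def lowerEquiv :
    (V →ₗ[K] Module.End K V) ≃ₗ[K] (V →ₗ[K] V →ₗ[K] V →ₗ[K] K) :=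
  LinearEquiv.congrRight (LinearEquiv.congrRight (BilinForm.toDual B hB))

@[simp]
lemma lowerEquiv_apply (A : V →ₗ[K] Module.End K V) (v w x : V) :
    lowerEquiv B hB A v w x = B (A v w) x :=
  BilinForm.toDual_def hB

lemma lowerEquiv_swap_eq_neg_iff (hB_symm : ∀ v w, B v w = B w v)
    (A : V →ₗ[K] Module.End K V) :
    (∀ v w x, lowerEquiv B hB A v x w = -lowerEquiv B hB A v w x) ↔
      ∀ v w x, B (A v w) x + B w (A v x) = 0 := by
  simp only [lowerEquiv_apply, hB_symm _ (A _ _), eq_neg_iff_add_eq_zero, add_comm]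

lemma lowerEquiv_sub_swap_eq_iff (A P : V →ₗ[K] Module.End K V) :
    (∀ v w x, lowerEquiv B hB A v w x - lowerEquiv B hB A w v x = lowerEquiv B hB P v w x) ↔
      ∀ v w, A v w - A w v = P v w := by
  have hB_inj : Function.Injective B := ker_eq_bot.mp (separatingLeft_iff_ker_eq_bot.mp hB.1)
  simp only [lowerEquiv_apply, ← sub_apply, ← map_sub, ← LinearMap.ext_iff, hB_inj.eq_iff]

end LowerIndex

end LinearMap

/-- Existence and uniqueness of the solution of the prolongation
equation `A v w - A w v = ω v w • u` among maps with values in `B`-skew-adjoint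
endomorphisms, for a nondegenerate symmetric bilinear form `B`, an alternating
bilinear form `ω`, and a fixed vector `u` on a finite-dimensional real vector space. -/
theorem existsUnique_skew_adjoint_prolongation
    (V : Type*) [AddCommGroup V] [Module ℝ V] [FiniteDimensional ℝ V]
    (B : V →ₗ[ℝ] V →ₗ[ℝ] ℝ)
    (hB_symm : ∀ v w : V, B v w = B w v)
    (hB_nondeg : ∀ v : V, (∀ w : V, B v w = 0) → v = 0)
    (ω : V →ₗ[ℝ] V →ₗ[ℝ] ℝ)
    (hω_alt : ∀ v : V, ω v v = 0)
    (u : V) :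
    ∃! A : V →ₗ[ℝ] Module.End ℝ V,
      (∀ v w x : V, B (A v w) x + B w (A v x) = 0) ∧
      (∀ v w : V, A v w - A w v = ω v w • u) := by
  have hB : B.Nondegenerate :=
    ⟨hB_nondeg, fun w hw => hB_nondeg w fun v => (hB_symm w v).trans (hw v)⟩
  set P : V →ₗ[ℝ] Module.End ℝ V := ω.compr₂ (LinearMap.toSpanSingleton ℝ V u)
  have hc (v w x : V) :
      LinearMap.lowerEquiv B hB P w v x = -LinearMap.lowerEquiv B hB P v w x := by
    simp [P, ← LinearMap.IsAlt.neg hω_alt v w]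
  refine (Equiv.existsUnique_congr (LinearMap.lowerEquiv B hB).toEquiv fun A => ?_).mpr
    (LinearMap.existsUnique_swap_eq_neg_and_sub_swap_eq hc)
  refine and_congr (LinearMap.lowerEquiv_swap_eq_neg_iff hB hB_symm A).symm ?_
  simpa [P] using (LinearMap.lowerEquiv_sub_swap_eq_iff hB A P).symm
end

section
/- Fix n ≥ 1 and sign sequences ε, δ : {1,…,n} → {−1, 1}. Let D ∈ M_{2n}(ℝ) be the diagonal matrix diag(ε_1, …, ε_n, δ_1, …, δ_n) and let Ω ∈ M_{2n}(ℝ) be the standard symplectic matrix. Consider the real linear subspace 𝔤 = {A ∈ M_{2n}(ℝ) : AᵀD + DA = 0 and AᵀΩ + ΩA = 0} of 2n×2n real matrices (the Lie algebra of O(D) ∩ Sp(Ω)). If s is the number of indices i ∈ {1,…,n} with ε_i = δ_i and t = n − s, then the dimension of 𝔤 over ℝ equals s² + t². -/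
/-!
Write `A = [[a, b], [c, d]]` in blocks and `σᵢ = εᵢ δᵢ`. Membership in the algebra says that
`d = -aᵀ`, that `b` and `c` are symmetric, that `diag ε * a` and `a * diag δ` are skew, and that
`diag ε * b + cᵀ * diag δ = 0`. Eliminating `aⱼᵢ`, respectively `c`, from these equations gives
`(σᵢ - σⱼ) aᵢⱼ = 0` and `(σᵢ - σⱼ) bᵢⱼ = 0`. Conversely, the strict upper triangle of `a` and the
lower triangle of `b` can be chosen freely on the pairs with `σᵢ = σⱼ`, and they determine `A`.
So the dimension is the number of pairs `(i, j)` with `σᵢ = σⱼ`. For signs, `σᵢ = 1` exactly when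
`εᵢ = δᵢ`, and there are `s² + t²` such pairs.
-/

open Matrix

/-- The Lie algebra of `O(D) ∩ Sp(Ω)`: matrices that are simultaneously infinitesimally
orthogonal for the symmetric form with Gram matrix `D` and infinitesimally symplectic
for the skew form with Gram matrix `Ω`, as a linear subspace of matrices. -/
def pairAlgebra {m : Type*} [Fintype m] (D Ω : Matrix m m ℝ) :
    Submodule ℝ (Matrix m m ℝ) where
  carrier := {A | Aᵀ * D + D * A = 0 ∧ Aᵀ * Ω + Ω * A = 0}
  add_mem' := by
    rintro a b ⟨ha1, ha2⟩ ⟨hb1, hb2⟩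
    constructor
    · have h : (a + b)ᵀ * D + D * (a + b) = (aᵀ * D + D * a) + (bᵀ * D + D * b) := by
        rw [Matrix.transpose_add, Matrix.add_mul, Matrix.mul_add]; abel
      rw [h, ha1, hb1, add_zero]
    · have h : (a + b)ᵀ * Ω + Ω * (a + b) = (aᵀ * Ω + Ω * a) + (bᵀ * Ω + Ω * b) := by
        rw [Matrix.transpose_add, Matrix.add_mul, Matrix.mul_add]; abel
      rw [h, ha2, hb2, add_zero]
  zero_mem' := by
    constructor <;> simp
  smul_mem' := by
    rintro c a ⟨ha1, ha2⟩
    constructor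
    · have h : (c • a)ᵀ * D + D * (c • a) = c • (aᵀ * D + D * a) := by
        rw [Matrix.transpose_smul, Matrix.smul_mul, Matrix.mul_smul, smul_add]
      rw [h, ha1, smul_zero]
    · have h : (c • a)ᵀ * Ω + Ω * (c • a) = c • (aᵀ * Ω + Ω * a) := by
        rw [Matrix.transpose_smul, Matrix.smul_mul, Matrix.mul_smul, smul_add]
      rw [h, ha2, smul_zero]

open Sum

section

variable {ι : Type*} {ε δ : ι → ℝ}

theorem mem_pairAlgebra_diagonal_J_iff [Fintype ι] [DecidableEq ι]
    {A : Matrix (ι ⊕ ι) (ι ⊕ ι) ℝ} :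
    A ∈ pairAlgebra (diagonal (Sum.elim ε δ)) (J ι ℝ) ↔
      (∀ i j, A (inr i) (inr j) = -A (inl j) (inl i)) ∧
      (∀ i j, A (inl i) (inr j) = A (inl j) (inr i)) ∧
      (∀ i j, A (inr i) (inl j) = A (inr j) (inl i)) ∧
      (∀ i j, ε i * A (inl i) (inl j) + ε j * A (inl j) (inl i) = 0) ∧
      (∀ i j, δ j * A (inl i) (inl j) + δ i * A (inl j) (inl i) = 0) ∧
      (∀ i j, ε i * A (inl i) (inr j) + δ j * A (inr j) (inl i) = 0) := by
  change (_ = 0 ∧ _ = 0) ↔ _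
  simp only [← Matrix.ext_iff, Sum.forall, forall_and, Matrix.add_apply, mul_diagonal,
    diagonal_mul, transpose_apply, elim_inl, elim_inr, Matrix.zero_apply]
  simp only [J, Matrix.mul_apply, transpose_apply, Fintype.sum_sum_type, fromBlocks_apply₁₁,
    fromBlocks_apply₁₂, fromBlocks_apply₂₁, fromBlocks_apply₂₂, Matrix.zero_apply,
    Matrix.one_apply, Matrix.neg_apply, mul_zero, zero_mul, mul_one, one_mul, mul_neg, neg_mul,
    mul_ite, ite_mul, Finset.sum_const_zero, Finset.sum_ite_eq, Finset.sum_ite_eq',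
    Finset.sum_neg_distrib, Finset.mem_univ, ↓reduceIte, zero_add, add_zero]
  constructor
  · rintro ⟨⟨⟨D₁₁, -⟩, D₂₁, D₂₂⟩, ⟨J₁₁, J₁₂⟩, -, J₂₂⟩
    refine ⟨fun i j => ?_, fun i j => ?_, fun i j => ?_, fun i j => ?_, fun i j => ?_,
      fun i j => ?_⟩
    · linear_combination J₁₂ j i
    · linear_combination -(J₂₂ j i)
    · linear_combination J₁₁ j i
    · linear_combination D₁₁ j i
    · linear_combination -(D₂₂ j i) + δ i * J₁₂ j i + δ j * J₁₂ i j
    · linear_combination D₂₁ i j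
  · rintro ⟨hd, hb, hc, ha, ha', hbc⟩
    refine ⟨⟨⟨fun i j => ?_, fun i j => ?_⟩, fun i j => ?_, fun i j => ?_⟩,
      ⟨fun i j => ?_, fun i j => ?_⟩, fun i j => ?_, fun i j => ?_⟩
    · linear_combination ha j i
    · linear_combination hbc j i
    · linear_combination hbc i j
    · linear_combination δ j * hd j i + δ i * hd i j - ha' i j
    · linear_combination hc j i
    · linear_combination hd j i
    · linear_combination -(hd i j)
    · linear_combination hb i j

theorem apply_inl_eq_zero_of_mem_pairAlgebra [Fintype ι] [DecidableEq ι]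
    {A : Matrix (ι ⊕ ι) (ι ⊕ ι) ℝ} (hA : A ∈ pairAlgebra (diagonal (Sum.elim ε δ)) (J ι ℝ))
    {i j : ι} (hij : ε i * δ i ≠ ε j * δ j) :
    A (inl i) (inl j) = 0 ∧ A (inl i) (inr j) = 0 := by
  obtain ⟨-, hb, hc, ha, ha', hbc⟩ := mem_pairAlgebra_diagonal_J_iff.1 hA
  have hσ : ε i * δ i - ε j * δ j ≠ 0 := sub_ne_zero.2 hij
  constructor
  · refine (mul_eq_zero.1 ?_).resolve_left hσ
    linear_combination δ i * ha i j - ε j * ha' i j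
  · refine (mul_eq_zero.1 ?_).resolve_left hσ
    linear_combination δ i * hbc i j - δ j * hbc j i + ε j * δ j * hb j i + δ i * δ j * hc i j

variable [LinearOrder ι]

noncomputable def upperSkew (ε : ι → ℝ) (g : ι × ι → ℝ) : Matrix ι ι ℝ :=
  of fun i j => if i < j then g (i, j) else if j < i then -(ε j / ε i * g (j, i)) else 0

def lowerSymm (g : ι × ι → ℝ) : Matrix ι ι ℝ :=
  of fun i j => if j ≤ i then g (i, j) else g (j, i)

theorem upperSkew_skew (hε : ∀ i, ε i ≠ 0) (g : ι × ι → ℝ) (i j : ι) :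
    ε i * upperSkew ε g i j + ε j * upperSkew ε g j i = 0 := by
  rcases lt_trichotomy i j with h | rfl | h
  · simp only [upperSkew, of_apply, if_pos h, if_neg h.not_gt]
    field_simp [hε j]
    ring
  · simp [upperSkew]
  · simp only [upperSkew, of_apply, if_pos h, if_neg h.not_gt]
    field_simp [hε i]
    ring

theorem lowerSymm_comm (g : ι × ι → ℝ) (i j : ι) : lowerSymm g i j = lowerSymm g j i := by
  rcases lt_trichotomy i j with h | rfl | h
  · simp [lowerSymm, h.le, h.not_ge]
  · rfl
  · simp [lowerSymm, h.le, h.not_ge]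

noncomputable def ofPairCoords (ε δ : ι → ℝ) (g : ι × ι → ℝ) : Matrix (ι ⊕ ι) (ι ⊕ ι) ℝ :=
  fromBlocks (upperSkew ε g) (lowerSymm g) (of fun i j => -(ε j / δ i * lowerSymm g i j))
    (-(upperSkew ε g)ᵀ)

def pairCoords : Matrix (ι ⊕ ι) (ι ⊕ ι) ℝ →ₗ[ℝ] ι × ι → ℝ where
  toFun A p := if p.1 < p.2 then A (inl p.1) (inl p.2) else A (inl p.1) (inr p.2)
  map_add' A B := by
    ext p; simp only [Pi.add_apply, Matrix.add_apply]; split_ifs <;> rfl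
  map_smul' c A := by
    ext p; simp only [Pi.smul_apply, Matrix.smul_apply, RingHom.id_apply]; split_ifs <;> rfl

theorem pairCoords_ofPairCoords (g : ι × ι → ℝ) : pairCoords (ofPairCoords ε δ g) = g := by
  ext ⟨i, j⟩
  by_cases h : i < j
  · simp [pairCoords, ofPairCoords, upperSkew, h]
  · simp [pairCoords, ofPairCoords, lowerSymm, h, not_lt.mp h]

theorem ofPairCoords_mem_pairAlgebra [Fintype ι] (hε : ∀ i, ε i ≠ 0) (hδ : ∀ i, δ i ≠ 0)
    {g : ι × ι → ℝ} (hg : ∀ i j, ε i * δ i ≠ ε j * δ j → g (i, j) = 0) :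
    ofPairCoords ε δ g ∈ pairAlgebra (diagonal (Sum.elim ε δ)) (J ι ℝ) := by
  have hzero : ∀ i j, ε i * δ i ≠ ε j * δ j → upperSkew ε g i j = 0 ∧ lowerSymm g i j = 0 :=
    fun i j hij => by simp [upperSkew, lowerSymm, hg i j hij, hg j i hij.symm]
  rw [mem_pairAlgebra_diagonal_J_iff]
  simp only [ofPairCoords, fromBlocks_apply₁₁, fromBlocks_apply₁₂, fromBlocks_apply₂₁,
    fromBlocks_apply₂₂, of_apply]
  refine ⟨fun i j => rfl, lowerSymm_comm g, fun i j => ?_, upperSkew_skew hε g,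
    fun i j => ?_, fun i j => ?_⟩
  · by_cases hij : ε i * δ i = ε j * δ j
    · rw [lowerSymm_comm g j i]
      field_simp [hδ i, hδ j]
      linear_combination lowerSymm g i j * hij
    · simp [(hzero i j hij).2, (hzero j i (Ne.symm hij)).2]
  · by_cases hij : ε i * δ i = ε j * δ j
    · refine (mul_eq_zero.1 ?_).resolve_left (mul_ne_zero (hε i) (hε j))
      linear_combination ε j * δ j * upperSkew_skew hε g i j + ε j * upperSkew ε g j i * hij
    · simp [(hzero i j hij).1, (hzero j i (Ne.symm hij)).1]
  · rw [lowerSymm_comm g j i]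
    field_simp [hδ j]
    ring

section

variable [Fintype ι] {A : Matrix (ι ⊕ ι) (ι ⊕ ι) ℝ}

theorem pairCoords_eq_zero_of_mem_pairAlgebra
    (hA : A ∈ pairAlgebra (diagonal (Sum.elim ε δ)) (J ι ℝ)) {p : ι × ι}
    (hp : ε p.1 * δ p.1 ≠ ε p.2 * δ p.2) : pairCoords A p = 0 := by
  obtain ⟨ha, hb⟩ := apply_inl_eq_zero_of_mem_pairAlgebra hA hp
  simp only [pairCoords, LinearMap.coe_mk, AddHom.coe_mk, ha, hb, ite_self]

theorem upperSkew_pairCoords (hA : A ∈ pairAlgebra (diagonal (Sum.elim ε δ)) (J ι ℝ))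
    (hε : ∀ i, ε i ≠ 0) (i j : ι) :
    upperSkew ε (pairCoords A) i j = A (inl i) (inl j) := by
  have ha := (mem_pairAlgebra_diagonal_J_iff.1 hA).2.2.2.1
  rcases lt_trichotomy i j with h | rfl | h
  · simp [upperSkew, pairCoords, h]
  · have : 2 * ε i * A (inl i) (inl i) = 0 := by linear_combination ha i i
    simpa [upperSkew, hε i, eq_comm] using this
  · simp only [upperSkew, pairCoords, of_apply, LinearMap.coe_mk, AddHom.coe_mk, if_pos h,
      if_neg h.not_gt]
    field_simp [hε i]
    linear_combination -(ha j i)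

theorem lowerSymm_pairCoords (hA : A ∈ pairAlgebra (diagonal (Sum.elim ε δ)) (J ι ℝ)) (i j : ι) :
    lowerSymm (pairCoords A) i j = A (inl i) (inr j) := by
  have hb := (mem_pairAlgebra_diagonal_J_iff.1 hA).2.1
  by_cases h : j ≤ i
  · simp [lowerSymm, pairCoords, h, not_lt.2 h]
  · simp [lowerSymm, pairCoords, h, (not_le.1 h).not_gt, hb j i]

theorem ofPairCoords_pairCoords (hA : A ∈ pairAlgebra (diagonal (Sum.elim ε δ)) (J ι ℝ))
    (hε : ∀ i, ε i ≠ 0) (hδ : ∀ i, δ i ≠ 0) :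
    ofPairCoords ε δ (pairCoords A) = A := by
  obtain ⟨hd, hb, -, -, -, hbc⟩ := mem_pairAlgebra_diagonal_J_iff.1 hA
  ext (i | i) (j | j)
  · exact upperSkew_pairCoords hA hε i j
  · exact lowerSymm_pairCoords hA i j
  · simp only [ofPairCoords, fromBlocks_apply₂₁, of_apply, lowerSymm_pairCoords hA, hb i j]
    field_simp [hδ i]
    linear_combination -(hbc j i)
  · simp [ofPairCoords, upperSkew_pairCoords hA hε, hd i j]

end

theorem finrank_pairAlgebra_diagonal_J [Fintype ι] (hε : ∀ i, ε i ≠ 0) (hδ : ∀ i, δ i ≠ 0) :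
    Module.finrank ℝ (pairAlgebra (diagonal (Sum.elim ε δ)) (J ι ℝ)) =
      Fintype.card {p : ι × ι // ε p.1 * δ p.1 = ε p.2 * δ p.2} := by
  set 𝔤 := pairAlgebra (diagonal (Sum.elim ε δ)) (J ι ℝ)
  let S := {p : ι × ι // ε p.1 * δ p.1 = ε p.2 * δ p.2}
  let Φ : 𝔤 →ₗ[ℝ] S → ℝ := LinearMap.funLeft ℝ ℝ Subtype.val ∘ₗ pairCoords ∘ₗ 𝔤.subtype
  have hΦ : Function.Bijective Φ := by
    refine ⟨fun A B hAB => ?_, fun f => ?_⟩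
    · have hcoords : pairCoords (A : Matrix (ι ⊕ ι) (ι ⊕ ι) ℝ) = pairCoords B := by
        ext p
        by_cases hp : ε p.1 * δ p.1 = ε p.2 * δ p.2
        · exact congrFun hAB ⟨p, hp⟩
        · rw [pairCoords_eq_zero_of_mem_pairAlgebra A.2 hp,
            pairCoords_eq_zero_of_mem_pairAlgebra B.2 hp]
      ext1
      rw [← ofPairCoords_pairCoords A.2 hε hδ, ← ofPairCoords_pairCoords B.2 hε hδ, hcoords]
    · let g : ι × ι → ℝ := fun p => if hp : ε p.1 * δ p.1 = ε p.2 * δ p.2 then f ⟨p, hp⟩ else 0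
      refine ⟨⟨ofPairCoords ε δ g, ofPairCoords_mem_pairAlgebra hε hδ fun i j hij => dif_neg hij⟩,
        funext fun p => ?_⟩
      simp [Φ, pairCoords_ofPairCoords, g, p.2]
  rw [(LinearEquiv.ofBijective Φ hΦ).finrank_eq, Module.finrank_fintype_fun_eq_card]

end

theorem Fintype.card_subtype_prod_iff {α : Type*} [Fintype α] (P : α → Prop) [DecidablePred P] :
    Fintype.card {p : α × α // (P p.1 ↔ P p.2)} =
      Fintype.card {a // P a} ^ 2 + Fintype.card {a // ¬P a} ^ 2 := by
  calc Fintype.card {p : α × α // (P p.1 ↔ P p.2)}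
      = Fintype.card {p : α × α // P p.1 ∧ P p.2 ∨ ¬P p.1 ∧ ¬P p.2} :=
        Fintype.card_congr (Equiv.subtypeEquivRight fun _ => iff_iff_and_or_not_and_not)
    _ = Fintype.card {p : α × α // P p.1 ∧ P p.2} +
          Fintype.card {p : α × α // ¬P p.1 ∧ ¬P p.2} :=
        Fintype.card_subtype_or_disjoint _ _ fun _ h₁ h₂ p hp => (h₂ p hp).1 (h₁ p hp).1
    _ = _ := by
        rw [Fintype.card_congr (Equiv.subtypeProdEquivProd (p := P) (q := P)),
          Fintype.card_congr (Equiv.subtypeProdEquivProd (p := (¬P ·)) (q := (¬P ·))),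
          Fintype.card_prod, Fintype.card_prod, sq, sq]

theorem mul_eq_mul_iff_of_sign {a b c d : ℝ} (ha : a = 1 ∨ a = -1) (hb : b = 1 ∨ b = -1)
    (hc : c = 1 ∨ c = -1) (hd : d = 1 ∨ d = -1) : a * b = c * d ↔ (a = b ↔ c = d) := by
  rcases ha with rfl | rfl <;> rcases hb with rfl | rfl <;> rcases hc with rfl | rfl <;>
    rcases hd with rfl | rfl <;> norm_num

theorem finrank_pairAlgebra_diagonal_symplectic_general
    (n : ℕ) (ε δ : Fin n → ℝ)
    (hε : ∀ i, ε i = 1 ∨ ε i = -1) (hδ : ∀ i, δ i = 1 ∨ δ i = -1)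
    (D : Matrix (Fin n ⊕ Fin n) (Fin n ⊕ Fin n) ℝ)
    (hD : D = Matrix.diagonal (Sum.elim ε δ))
    (Ω : Matrix (Fin n ⊕ Fin n) (Fin n ⊕ Fin n) ℝ)
    (hΩ : Ω = Matrix.fromBlocks 0 (-1) 1 0)
    (s : ℕ) (hs : s = Nat.card {i : Fin n // ε i = δ i}) :
    Module.finrank ℝ (pairAlgebra D Ω) = s ^ 2 + (n - s) ^ 2 := by
  have ne_zero {x : ℝ} (hx : x = 1 ∨ x = -1) : x ≠ 0 := by rcases hx with rfl | rfl <;> norm_num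
  subst hD hΩ hs
  rw [← J, finrank_pairAlgebra_diagonal_J (fun i => ne_zero (hε i)) (fun i => ne_zero (hδ i)),
    Fintype.card_congr (Equiv.subtypeEquivRight fun p =>
      mul_eq_mul_iff_of_sign (hε p.1) (hδ p.1) (hε p.2) (hδ p.2)),
    Fintype.card_subtype_prod_iff (fun i => ε i = δ i), Nat.card_eq_fintype_card,
    Fintype.card_subtype_compl, Fintype.card_fin]

/-- For `D = diag(ε₁,…,εₙ,δ₁,…,δₙ)` with `εᵢ, δᵢ ∈ {−1,1}` and `Ω` the
standard symplectic matrix, the dimension of the Lie algebra of `O(D) ∩ Sp(Ω)` equals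
`s² + t²`, where `s` is the number of indices with `εᵢ = δᵢ` and `t = n − s`. -/
theorem finrank_pairAlgebra_diagonal_symplectic
    (n : ℕ) (hn : 1 ≤ n) (ε δ : Fin n → ℝ)
    (hε : ∀ i, ε i = 1 ∨ ε i = -1) (hδ : ∀ i, δ i = 1 ∨ δ i = -1)
    (D : Matrix (Fin n ⊕ Fin n) (Fin n ⊕ Fin n) ℝ)
    (hD : D = Matrix.diagonal (Sum.elim ε δ))
    (Ω : Matrix (Fin n ⊕ Fin n) (Fin n ⊕ Fin n) ℝ)
    (hΩ : Ω = Matrix.fromBlocks 0 (-1) 1 0)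
    (s : ℕ) (hs : s = Nat.card {i : Fin n // ε i = δ i}) :
    Module.finrank ℝ (pairAlgebra D Ω) = s ^ 2 + (n - s) ^ 2 :=
  finrank_pairAlgebra_diagonal_symplectic_general n ε δ hε hδ D hD Ω hΩ s hs
end

section
/- Let V be a finite-dimensional real vector space, B a nondegenerate symmetric bilinear form on V, and J an endomorphism of V that is skew-adjoint with respect to B, i.e. B(J(v), w) + B(v, J(w)) = 0 for all v, w ∈ V. Then for any real numbers λ, μ with λ + μ ≠ 0, B(v, w) = 0 whenever v lies in the generalized eigenspace of J for the eigenvalue λ and w lies in the generalized eigenspace of J for the eigenvalue μ. In particular, B vanishes identically on the generalized eigenspace of J for any nonzero real eigenvalue λ. -/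
/-!
Put `T = J - λ` and `S = J - μ`. Skew-adjointness of `J` gives
`B (T v) w + B v (S w) = -(λ + μ) B v w`, so if `λ + μ ≠ 0`, then `B v w = 0` as soon as
`B (T v) w = 0` and `B v (S w) = 0`. Induction on `k + l`, where `T ^ k v = 0` and `S ^ l w = 0`,
then kills `B v w` for all generalized eigenvectors `v`, `w`.
-/

namespace LinearMap

variable {R M : Type*} [CommRing R] [AddCommGroup M] [Module R M]
  {B : M →ₗ[R] M →ₗ[R] R} {J : Module.End R M}

theorem apply_sub_smul_add_apply_sub_smul (hJ : ∀ v w, B (J v) w + B v (J w) = 0)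
    (a b : R) (v w : M) :
    B ((J - a • 1) v) w + B v ((J - b • 1) w) = -((a + b) * B v w) := by
  have hskew := hJ v w
  simp only [sub_apply, smul_apply, Module.End.one_apply, map_sub, map_smul, smul_eq_mul]
  linear_combination hskew

theorem apply_eq_zero_of_pow_sub_smul_apply_eq_zero [NoZeroDivisors R]
    (hJ : ∀ v w, B (J v) w + B v (J w) = 0) {a b : R} (hab : a + b ≠ 0) {k l : ℕ} {v w : M}
    (hv : ((J - a • 1) ^ k) v = 0) (hw : ((J - b • 1) ^ l) w = 0) : B v w = 0 := by
  induction k generalizing v l w with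
  | zero => simp_all
  | succ k ihk =>
    induction l generalizing w with
    | zero => simp_all
    | succ l ihl =>
      rw [pow_succ, Module.End.mul_apply] at hv hw
      have hTv : B ((J - a • 1) v) w = 0 := ihk hv (by rwa [pow_succ, Module.End.mul_apply])
      have hSw : B v ((J - b • 1) w) = 0 := ihl hw
      have hsum := apply_sub_smul_add_apply_sub_smul hJ a b v w
      rw [hTv, hSw, zero_add, eq_comm, neg_eq_zero] at hsum
      exact (mul_eq_zero.mp hsum).resolve_left hab

theorem apply_eq_zero_of_mem_maxGenEigenspace [NoZeroDivisors R]
    (hJ : ∀ v w, B (J v) w + B v (J w) = 0) {a b : R} (hab : a + b ≠ 0) {v w : M}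
    (hv : v ∈ J.maxGenEigenspace a) (hw : w ∈ J.maxGenEigenspace b) : B v w = 0 := by
  obtain ⟨k, hk⟩ := (Module.End.mem_maxGenEigenspace J a v).mp hv
  obtain ⟨l, hl⟩ := (Module.End.mem_maxGenEigenspace J b w).mp hw
  exact apply_eq_zero_of_pow_sub_smul_apply_eq_zero hJ hab hk hl

end LinearMap

theorem skew_adjoint_genEigenspaces_orthogonal_general
    (V : Type*) [AddCommGroup V] [Module ℝ V]
    (B : V →ₗ[ℝ] V →ₗ[ℝ] ℝ)
    (J : Module.End ℝ V)
    (hJ_skew : ∀ v w : V, B (J v) w + B v (J w) = 0) :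
    (∀ lam mu : ℝ, lam + mu ≠ 0 →
      ∀ v ∈ J.maxGenEigenspace lam, ∀ w ∈ J.maxGenEigenspace mu, B v w = 0) ∧
    (∀ lam : ℝ, lam ≠ 0 →
      ∀ v ∈ J.maxGenEigenspace lam, ∀ w ∈ J.maxGenEigenspace lam, B v w = 0) :=
  ⟨fun _ _ hlm _ hv _ hw => LinearMap.apply_eq_zero_of_mem_maxGenEigenspace hJ_skew hlm hv hw,
    fun _ hlam _ hv _ hw =>
      LinearMap.apply_eq_zero_of_mem_maxGenEigenspace hJ_skew
        (add_self_eq_zero.not.mpr hlam) hv hw⟩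

/-- If `J` is skew-adjoint with respect to a nondegenerate symmetric
bilinear form `B` on a finite-dimensional real vector space, then the generalized
eigenspaces for real eigenvalues `λ`, `μ` with `λ + μ ≠ 0` are `B`-orthogonal; in
particular `B` vanishes identically on the generalized eigenspace of any nonzero real
eigenvalue. -/
theorem skew_adjoint_genEigenspaces_orthogonal
    (V : Type*) [AddCommGroup V] [Module ℝ V] [FiniteDimensional ℝ V]
    (B : V →ₗ[ℝ] V →ₗ[ℝ] ℝ)
    (hB_symm : ∀ v w : V, B v w = B w v)
    (hB_nondeg : ∀ v : V, (∀ w : V, B v w = 0) → v = 0)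
    (J : Module.End ℝ V)
    (hJ_skew : ∀ v w : V, B (J v) w + B v (J w) = 0) :
    (∀ lam mu : ℝ, lam + mu ≠ 0 →
      ∀ v ∈ J.maxGenEigenspace lam, ∀ w ∈ J.maxGenEigenspace mu, B v w = 0) ∧
    (∀ lam : ℝ, lam ≠ 0 →
      ∀ v ∈ J.maxGenEigenspace lam, ∀ w ∈ J.maxGenEigenspace lam, B v w = 0) :=
  skew_adjoint_genEigenspaces_orthogonal_general V B J hJ_skew
end

section
/- Let V be a real vector space of dimension 2n, g a nondegenerate symmetric bilinear form on V, and ω a nondegenerate alternating bilinear form on V, and let J be the unique endomorphism of V satisfying ω(v, w) = g(J(v), w) for all v, w ∈ V. Suppose there exists a basis e_1, …, e_{2n} of V that is simultaneously orthonormal for g (g(e_i, e_j) = 0 for i ≠ j and g(e_i, e_i) ∈ {−1, 1} for all i) and symplectic for ω (ω(e_i, e_{n+j}) = δ_{ij} and ω(e_i, e_j) = ω(e_{n+i}, e_{n+j}) = 0 for all 1 ≤ i, j ≤ n). Then J⁴ = id_V; in particular every complex eigenvalue of J lies in {i, −i, 1, −1}. -/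
/-!
On a basis that is orthonormal for `g` and symplectic for `ω`, the defining relation
`ω(v, w) = g(J v, w)` forces `J` to exchange the two halves of the basis up to signs:
`J eᵢ = ε' e'ᵢ` and `J e'ᵢ = -ε eᵢ`, where `e'ᵢ = e_{n+i}` and `ε, ε' = ±1` are the
`g`-norms of `eᵢ, e'ᵢ`.
Hence `J²` is diagonal on the basis with entries `-ε ε' = ±1`, and `J⁴ = (J²)² = 1`.
-/

open Module

theorem LinearMap.SeparatingLeft.eq_of_apply_basis_eq {R M₁ M₂ N ι : Type*} [CommRing R]
    [AddCommGroup M₁] [Module R M₁] [AddCommGroup M₂] [Module R M₂] [AddCommGroup N]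
    [Module R N] {B : M₁ →ₗ[R] M₂ →ₗ[R] N} (hB : B.SeparatingLeft) (e : Basis ι R M₂)
    {v w : M₁} (h : ∀ j, B v (e j) = B w (e j)) : v = w := by
  have hvw : B (v - w) = 0 := e.ext fun j => by simp [h j]
  exact sub_eq_zero.mp <| hB _ fun y => by rw [hvw, LinearMap.zero_apply]

theorem eq_smul_basis_of_apply_basis_eq_ite {R M ι : Type*} [CommRing R] [AddCommGroup M]
    [Module R M] [DecidableEq ι] {g : M →ₗ[R] M →ₗ[R] R} (e : Basis ι R M)
    (hg : g.SeparatingLeft) (h_orth : ∀ i j, i ≠ j → g (e i) (e j) = 0) {k : ι}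
    (hk : g (e k) (e k) ^ 2 = 1)
    {v : M} {a : R} (hv : ∀ j, g v (e j) = if j = k then a else 0) :
    v = (a * g (e k) (e k)) • e k := by
  refine hg.eq_of_apply_basis_eq e fun j => ?_
  rw [hv, map_smul, LinearMap.smul_apply, smul_eq_mul]
  split_ifs with hjk
  · rw [hjk, mul_assoc, ← sq, hk, mul_one]
  · rw [h_orth k j (Ne.symm hjk), mul_zero]

theorem Module.End.sq_eq_one_of_apply_basis {R M ι : Type*} [CommSemiring R] [AddCommMonoid M]
    [Module R M] {f : Module.End R M} (e : Basis ι R M) (c : ι → R) (hc : ∀ k, c k ^ 2 = 1)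
    (hf : ∀ k, f (e k) = c k • e k) : f ^ 2 = 1 :=
  e.ext fun k => by
    rw [sq, Module.End.mul_apply, hf, map_smul, hf, smul_smul, ← sq, hc, one_smul,
      Module.End.one_apply]

theorem compatible_structure_J_pow_four_general
    (n : ℕ) (V : Type*) [AddCommGroup V] [Module ℝ V]
    (g ω : V →ₗ[ℝ] V →ₗ[ℝ] ℝ)
    (hg_nondeg : ∀ v : V, (∀ w : V, g v w = 0) → v = 0)
    (hω_alt : ∀ v : V, ω v v = 0)
    (J : Module.End ℝ V)
    (hJ : ∀ v w : V, ω v w = g (J v) w)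
    (e : Module.Basis (Fin n ⊕ Fin n) ℝ V)
    (h_orth : ∀ i j, i ≠ j → g (e i) (e j) = 0)
    (h_unit : ∀ i, g (e i) (e i) = 1 ∨ g (e i) (e i) = -1)
    (h_sympl₁ : ∀ i j : Fin n,
      ω (e (Sum.inl i)) (e (Sum.inr j)) = if i = j then 1 else 0)
    (h_sympl₂ : ∀ i j : Fin n, ω (e (Sum.inl i)) (e (Sum.inl j)) = 0)
    (h_sympl₃ : ∀ i j : Fin n, ω (e (Sum.inr i)) (e (Sum.inr j)) = 0) :
    J ^ 4 = 1 := by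
  set ε : Fin n ⊕ Fin n → ℝ := fun k => g (e k) (e k)
  have hε : ∀ k, ε k ^ 2 = 1 := fun k => sq_eq_one_iff.mpr (h_unit k)
  have hJ_inl : ∀ i, J (e (.inl i)) = ε (.inr i) • e (.inr i) := fun i => by
    convert eq_smul_basis_of_apply_basis_eq_ite e hg_nondeg h_orth (hε _) (a := 1) fun j => ?_
      using 2
    · exact (one_mul _).symm
    rw [← hJ]
    rcases j with j | j
    · simp [h_sympl₂]
    · simp [h_sympl₁, eq_comm]
  have hJ_inr : ∀ i, J (e (.inr i)) = (-ε (.inl i)) • e (.inl i) := fun i => by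
    convert eq_smul_basis_of_apply_basis_eq_ite e hg_nondeg h_orth (hε _) (a := -1) fun j => ?_
      using 2
    · exact (neg_one_mul _).symm
    rw [← hJ]
    rcases j with j | j
    · rw [← LinearMap.IsAlt.neg hω_alt, h_sympl₁]
      by_cases hij : i = j
      · simp [hij]
      · simp [Ne.symm hij]
    · simp [h_sympl₃]
  have hJ_sq : ∀ k, (J ^ 2) (e k) = (-(ε k * ε k.swap)) • e k := by
    rintro (i | i) <;>
      simp only [sq, Module.End.mul_apply, hJ_inl, hJ_inr, map_smul, smul_smul, Sum.swap_inl,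
        Sum.swap_inr] <;> congr 1 <;> ring
  have hJ_sq_sq : (J ^ 2) ^ 2 = 1 :=
    Module.End.sq_eq_one_of_apply_basis e _ (fun k => by rw [neg_sq, mul_pow, hε, hε, one_mul])
      hJ_sq
  rw [← hJ_sq_sq, ← pow_mul]

/-- Let `g` be a nondegenerate symmetric bilinear form and `ω` a
nondegenerate alternating bilinear form on a real vector space of dimension `2n`, and
let `J` be the endomorphism determined by `ω(v, w) = g(J(v), w)`. If there is a basis
`e` that is simultaneously orthonormal for `g` and symplectic for `ω`, then `J⁴ = id`. -/
theorem compatible_structure_J_pow_four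
    (n : ℕ) (V : Type*) [AddCommGroup V] [Module ℝ V]
    (g ω : V →ₗ[ℝ] V →ₗ[ℝ] ℝ)
    (hg_symm : ∀ v w : V, g v w = g w v)
    (hg_nondeg : ∀ v : V, (∀ w : V, g v w = 0) → v = 0)
    (hω_alt : ∀ v : V, ω v v = 0)
    (hω_nondeg : ∀ v : V, (∀ w : V, ω v w = 0) → v = 0)
    (J : Module.End ℝ V)
    (hJ : ∀ v w : V, ω v w = g (J v) w)
    (e : Module.Basis (Fin n ⊕ Fin n) ℝ V)
    (h_orth : ∀ i j, i ≠ j → g (e i) (e j) = 0)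
    (h_unit : ∀ i, g (e i) (e i) = 1 ∨ g (e i) (e i) = -1)
    (h_sympl₁ : ∀ i j : Fin n,
      ω (e (Sum.inl i)) (e (Sum.inr j)) = if i = j then 1 else 0)
    (h_sympl₂ : ∀ i j : Fin n, ω (e (Sum.inl i)) (e (Sum.inl j)) = 0)
    (h_sympl₃ : ∀ i j : Fin n, ω (e (Sum.inr i)) (e (Sum.inr j)) = 0) :
    J ^ 4 = 1 :=
  compatible_structure_J_pow_four_general n V g ω hg_nondeg hω_alt J hJ e h_orth h_unit h_sympl₁
    h_sympl₂ h_sympl₃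
end
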